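/- Let ω = (ω₁, ω₂, ω₃) ∈ ℝ³ be a unit vector with ω₃ > 0, let A > 0, B ∈ ℝ, μ > 0, and I ∈ ℝ. Let u : ℝ² → ℝ be differentiable at a point x; write p := ∇u(x), s := √(1 + ‖p‖²), n := (−p, 1)/s, and c := I − B + B·(⟨n, ω⟩)², and assume c ≥ 0. Set v := (1 − exp(−μu))/μ. Then the Oren–Nayar Hamilton–Jacobi equation (I − B)·s + A·((ω₁, ω₂)·p − ω₃) + B·(−(ω₁, ω₂)·p + ω₃)²/s = 0 holds if and only if μ·v(x) = min over a = (a₁,a₂,a₃) in the unit sphere of ℝ³ of { (1/(A·ω₃))·((c·a₁ − A·ω₁)·∂₁v(x) + (c·a₂ − A·ω₂)·∂₂v(x)) − (c·a₃/(A·ω₃))·(1 − μ·v(x)) + 1 }. -/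

import Mathlib

/-!
Under the Kružkov transform, `∇v = e ∇u` and `1 - μ v = e` with `e = exp (-μ u) > 0`, so the
cost is `1 - e (ω̃ · p) / ω₃ + c / (A ω₃) ⟪a, w⟫` with `w = -e (-p, 1)`, affine in `a` with
nonnegative slope. By Cauchy–Schwarz `⟪a, w⟫` has minimum `-‖w‖ = -e s` on the unit sphere,
attained at the unit normal `n`. Equating `1 - e` with the resulting minimum and clearing the
positive factor `e / (A ω₃)` leaves `c s + A (ω̃ · p - ω₃) = 0`, which is the Hamilton–Jacobi
equation because `c s = (I - B) s + B (ω₃ - ω̃ · p)² / s`.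
-/

open Real RealInnerProductSpace Metric

theorem isLeast_inner_image_sphere {E : Type*} [NormedAddCommGroup E] [InnerProductSpace ℝ E]
    [Nontrivial E] (w : E) {r : ℝ} (hr : 0 ≤ r) :
    IsLeast ((fun a => ⟪a, w⟫) '' sphere 0 r) (-(r * ‖w‖)) := by
  refine ⟨?_, ?_⟩
  · rcases eq_or_ne w 0 with rfl | hw
    · obtain ⟨a, ha⟩ := (NormedSpace.sphere_nonempty (x := (0 : E))).2 hr
      exact ⟨a, ha, by simp⟩
    · have hw' : ‖w‖ ≠ 0 := norm_ne_zero_iff.2 hw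
      refine ⟨-(r / ‖w‖) • w, ?_, ?_⟩
      · simp [norm_smul, abs_of_nonneg hr, hw']
      · simp only [inner_smul_left, real_inner_self_eq_norm_sq, conj_trivial]
        field_simp
  · rintro _ ⟨a, ha, rfl⟩
    rw [mem_sphere_zero_iff_norm] at ha
    have := abs_real_inner_le_norm a w
    rw [ha] at this
    exact neg_le_of_abs_le this

noncomputable def kruzkovTransform (μ t : ℝ) : ℝ := (1 - exp (-(μ * t))) / μ

theorem mul_kruzkovTransform {μ : ℝ} (hμ : μ ≠ 0) (t : ℝ) :
    μ * kruzkovTransform μ t = 1 - exp (-(μ * t)) := by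
  rw [kruzkovTransform, mul_div_cancel₀ _ hμ]

theorem hasDerivAt_kruzkovTransform {μ : ℝ} (hμ : μ ≠ 0) (t : ℝ) :
    HasDerivAt (kruzkovTransform μ) (exp (-(μ * t))) t := by
  have hexp : HasDerivAt (fun t => exp (-(μ * t))) (exp (-(μ * t)) * -μ) t := by
    simpa [mul_comm] using ((hasDerivAt_id t).const_mul μ).neg.exp
  exact ((hexp.const_sub 1).div_const μ).congr_deriv (by field_simp)

theorem gradient_kruzkovTransform_comp {F : Type*} [NormedAddCommGroup F]
    [InnerProductSpace ℝ F] [CompleteSpace F] {μ : ℝ} (hμ : μ ≠ 0) {u : F → ℝ} {x : F}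
    (hu : DifferentiableAt ℝ u x) :
    gradient (fun y => kruzkovTransform μ (u y)) x = exp (-(μ * u x)) • gradient u x := by
  apply HasGradientAt.gradient
  rw [hasGradientAt_iff_hasFDerivAt, map_smul]
  exact (hasDerivAt_kruzkovTransform hμ (u x)).comp_hasFDerivAt x hu.hasGradientAt.hasFDerivAt

/-- Divided by `√(1 + ‖p‖ ^ 2)` this is the unit normal `n` to the graph. -/
noncomputable def graphNormal (p : EuclideanSpace ℝ (Fin 2)) : EuclideanSpace ℝ (Fin 3) :=
  !₂[-p 0, -p 1, 1]

theorem norm_graphNormal (p : EuclideanSpace ℝ (Fin 2)) :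
    ‖graphNormal p‖ = √(1 + ‖p‖ ^ 2) := by
  rw [← sqrt_sq (norm_nonneg _), EuclideanSpace.real_norm_sq_eq,
    EuclideanSpace.real_norm_sq_eq]
  simp [graphNormal, Fin.sum_univ_three, Fin.sum_univ_two]
  ring_nf

theorem inner_graphNormal (a : EuclideanSpace ℝ (Fin 3)) (p : EuclideanSpace ℝ (Fin 2)) :
    ⟪a, graphNormal p⟫ = -(a 0 * p 0) - a 1 * p 1 + a 2 := by
  simp [graphNormal, PiLp.inner_apply, Fin.sum_univ_three]
  ring

theorem oren_nayar_fixed_point_form_general (ω : EuclideanSpace ℝ (Fin 3))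
    (hω3 : 0 < ω 2) (A B μ I : ℝ) (hA : 0 < A) (hμ : 0 < μ)
    (u : EuclideanSpace ℝ (Fin 2) → ℝ) (x : EuclideanSpace ℝ (Fin 2))
    (hu : DifferentiableAt ℝ u x)
    (p : EuclideanSpace ℝ (Fin 2)) (hp : p = gradient u x)
    (s : ℝ) (hs : s = Real.sqrt (1 + ‖p‖ ^ 2))
    (c : ℝ) (hc : c = I - B + B * ((-(ω 0 * p 0 + ω 1 * p 1) + ω 2) / s) ^ 2)
    (hc0 : 0 ≤ c)
    (v : EuclideanSpace ℝ (Fin 2) → ℝ)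
    (hv : v = fun y => (1 - Real.exp (-(μ * u y))) / μ) :
    ((I - B) * s + A * ((ω 0 * p 0 + ω 1 * p 1) - ω 2)
        + B * (-(ω 0 * p 0 + ω 1 * p 1) + ω 2) ^ 2 / s = 0)
    ↔ μ * v x = sInf ((fun a : EuclideanSpace ℝ (Fin 3) =>
        (1 / (A * ω 2)) * ((c * a 0 - A * ω 0) * gradient v x 0
          + (c * a 1 - A * ω 1) * gradient v x 1)
          - (c * a 2 / (A * ω 2)) * (1 - μ * v x) + 1) ''
        Metric.sphere (0 : EuclideanSpace ℝ (Fin 3)) 1) := by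
  set e := exp (-(μ * u x))
  have hAω : 0 < A * ω 2 := mul_pos hA hω3
  have hs0 : 0 < s := hs ▸ sqrt_pos.2 (by positivity)
  have hμv : μ * v x = 1 - e := hv ▸ mul_kruzkovTransform hμ.ne' (u x)
  have hgrad : gradient v x = e • p := by
    rw [hp, hv]; exact gradient_kruzkovTransform_comp hμ.ne' hu
  have hN : ‖-(e • graphNormal p)‖ = e * s := by
    rw [norm_neg, norm_smul, norm_graphNormal, ← hs, norm_of_nonneg (exp_pos _).le]
  have hcost : ∀ a : EuclideanSpace ℝ (Fin 3),
      (1 / (A * ω 2)) * ((c * a 0 - A * ω 0) * gradient v x 0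
          + (c * a 1 - A * ω 1) * gradient v x 1) - (c * a 2 / (A * ω 2)) * (1 - μ * v x) + 1
        = (1 - e * (ω 0 * p 0 + ω 1 * p 1) / ω 2)
          + c / (A * ω 2) * ⟪a, -(e • graphNormal p)⟫ := by
    intro a
    rw [inner_neg_right, inner_smul_right, inner_graphNormal, hgrad, hμv]
    simp only [PiLp.smul_apply, smul_eq_mul]
    field_simp
    ring
  have hmono : Monotone fun t => (1 - e * (ω 0 * p 0 + ω 1 * p 1) / ω 2) + c / (A * ω 2) * t :=
    (monotone_id.const_mul (div_nonneg hc0 hAω.le)).const_add _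
  have hmin := hmono.map_isLeast (isLeast_inner_image_sphere (-(e • graphNormal p)) zero_le_one)
  rw [Set.image_image, one_mul, hN] at hmin
  simp only [hcost]
  have hfactor : 1 - e - ((1 - e * (ω 0 * p 0 + ω 1 * p 1) / ω 2) + c / (A * ω 2) * -(e * s))
      = e / (A * ω 2) * ((I - B) * s + A * ((ω 0 * p 0 + ω 1 * p 1) - ω 2)
        + B * (-(ω 0 * p 0 + ω 1 * p 1) + ω 2) ^ 2 / s) := by
    rw [hc]
    field_simp
    ring
  rw [hmin.csInf_eq, hμv, ← sub_eq_zero (a := 1 - e), hfactor, mul_eq_zero,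
    or_iff_right (div_pos (exp_pos _) hAω).ne']

/-- Equivalence between the Oren–Nayar Shape-from-Shading Hamilton–Jacobi equation (case
`θ_i = θ_r`, `φ_r = φ_i`) `(I − B)s + A(ω̃·p − ω₃) + B(−ω̃·p + ω₃)²/s = 0`, where
`p = ∇u(x)` and `s = √(1 + ‖p‖²)`, and its fixed-point form
`μv = min_{a ∈ ∂B₃} { b^{ON}(x,a)·∇v + f^{ON}(x,a,v) }`, with `c = I − B + B⟨n, ω⟩²`
(`n = (−p, 1)/s` the unit normal, so `⟨n, ω⟩ = (−ω̃·p + ω₃)/s`), `c ≥ 0`,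
`b^{ON}(x,a) = (c a₁ − Aω₁, c a₂ − Aω₂)/(Aω₃)`, `f^{ON}(x,a,v) = −(c a₃/(Aω₃))(1−μv) + 1`,
and `v = (1 − exp(−μu))/μ` the Kružkov transform of `u`. -/
theorem oren_nayar_fixed_point_form (ω : EuclideanSpace ℝ (Fin 3)) (hω : ‖ω‖ = 1)
    (hω3 : 0 < ω 2) (A B μ I : ℝ) (hA : 0 < A) (hμ : 0 < μ)
    (u : EuclideanSpace ℝ (Fin 2) → ℝ) (x : EuclideanSpace ℝ (Fin 2))
    (hu : DifferentiableAt ℝ u x)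
    (p : EuclideanSpace ℝ (Fin 2)) (hp : p = gradient u x)
    (s : ℝ) (hs : s = Real.sqrt (1 + ‖p‖ ^ 2))
    (c : ℝ) (hc : c = I - B + B * ((-(ω 0 * p 0 + ω 1 * p 1) + ω 2) / s) ^ 2)
    (hc0 : 0 ≤ c)
    (v : EuclideanSpace ℝ (Fin 2) → ℝ)
    (hv : v = fun y => (1 - Real.exp (-(μ * u y))) / μ) :
    ((I - B) * s + A * ((ω 0 * p 0 + ω 1 * p 1) - ω 2)
        + B * (-(ω 0 * p 0 + ω 1 * p 1) + ω 2) ^ 2 / s = 0)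
    ↔ μ * v x = sInf ((fun a : EuclideanSpace ℝ (Fin 3) =>
        (1 / (A * ω 2)) * ((c * a 0 - A * ω 0) * gradient v x 0
          + (c * a 1 - A * ω 1) * gradient v x 1)
          - (c * a 2 / (A * ω 2)) * (1 - μ * v x) + 1) ''
        Metric.sphere (0 : EuclideanSpace ℝ (Fin 3)) 1) :=
  oren_nayar_fixed_point_form_general ω hω3 A B μ I hA hμ u x hu p hp s hs c hc hc0 v hv
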